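/- For every H ∈ (3/4, 1), setting γ := 2 − 2H, the double integral ∫_0^∞ x^{γ−1} ( ∫_0^x y^{γ−1} min(1, (x−y)^{−2}) dy ) dx is finite. -/

import Mathlib

/-!
Write `k(t) = min 1 (t ^ (-2))`; it is at most `2 / (1 + t ^ 2)`, so `∫ k ≤ 2π`. For `x > 0` the
inner integral `I(x)` is at most `∫₀ˣ y ^ (γ - 1) = x ^ γ / γ`, and, splitting at `y = x / 2`
(where either `k(x - y) ≤ 4 x ^ (-2)` or `y ^ (γ - 1) ≤ 2 x ^ (γ - 1)`), also at most
`4 x ^ (γ - 2) / γ + 4π x ^ (γ - 1)`. Hence the outer integrand is `O(x ^ (2γ - 1))` on `(0, 1]`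
and `O(x ^ (2γ - 2))` on `(1, ∞)`, both integrable since `0 < γ < 1/2`.
-/

open MeasureTheory Set Real
open scoped ENNReal

noncomputable def innerIntegral (γ x : ℝ) : ℝ≥0∞ :=
  ∫⁻ y in Ioo 0 x, ENNReal.ofReal (y ^ (γ - 1) * min 1 ((x - y) ^ (-(2:ℝ))))

lemma setLIntegral_Ioo_rpow {r c : ℝ} (hr : -1 < r) (hc : 0 < c) :
    ∫⁻ y in Ioo 0 c, ENNReal.ofReal (y ^ r) = ENNReal.ofReal (c ^ (r + 1) / (r + 1)) := by
  have hint : IntegrableOn (fun y : ℝ => y ^ r) (Ioo 0 c) :=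
    (intervalIntegral.integrableOn_Ioo_rpow_iff hc).2 hr
  rw [← ofReal_integral_eq_lintegral_ofReal hint
    (ae_restrict_of_forall_mem measurableSet_Ioo fun y hy => rpow_nonneg hy.1.le r),
    ← integral_Ioc_eq_integral_Ioo, ← intervalIntegral.integral_of_le hc.le,
    integral_rpow (Or.inl hr), zero_rpow (by linarith), sub_zero]

lemma min_one_rpow_neg_two_le (t : ℝ) : min 1 (t ^ (-(2:ℝ))) ≤ 2 * (1 + t ^ 2)⁻¹ := by
  rw [show (-(2:ℝ)) = ((-2 : ℤ) : ℝ) by norm_num, rpow_intCast, zpow_neg, zpow_two, ← sq,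
    ← div_eq_mul_inv]
  rcases le_total (t ^ 2) 1 with h | h
  · exact (min_le_left _ _).trans ((le_div_iff₀ (by positivity)).2 (by linarith))
  · refine (min_le_right _ _).trans ?_
    rw [inv_eq_one_div, div_le_div_iff₀ (by linarith) (by positivity)]
    linarith

lemma setLIntegral_min_one_rpow_neg_two_le (x : ℝ) (s : Set ℝ) :
    ∫⁻ y in s, ENNReal.ofReal (min 1 ((x - y) ^ (-(2:ℝ)))) ≤ ENNReal.ofReal (2 * π) :=
  calc ∫⁻ y in s, ENNReal.ofReal (min 1 ((x - y) ^ (-(2:ℝ))))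
      ≤ ∫⁻ y, ENNReal.ofReal (2 * (1 + (x - y) ^ 2)⁻¹) :=
        (lintegral_mono fun y => ENNReal.ofReal_le_ofReal (min_one_rpow_neg_two_le _)).trans
          (setLIntegral_le_lintegral _ _)
    _ = ∫⁻ t, ENNReal.ofReal (2 * (1 + t ^ 2)⁻¹) :=
        (Measure.measurePreserving_sub_left volume x).lintegral_comp
          (f := fun t => ENNReal.ofReal (2 * (1 + t ^ 2)⁻¹)) (by fun_prop)
    _ = ENNReal.ofReal (2 * π) := by
        rw [← ofReal_integral_eq_lintegral_ofReal (integrable_inv_one_add_sq.const_mul 2)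
          (.of_forall fun t => by positivity), integral_const_mul, integral_univ_inv_one_add_sq]

section
variable {γ x : ℝ}

lemma innerIntegral_le_rpow (hγ : 0 < γ) (hx : 0 < x) :
    innerIntegral γ x ≤ ENNReal.ofReal (x ^ γ / γ) :=
  calc innerIntegral γ x ≤ ∫⁻ y in Ioo 0 x, ENNReal.ofReal (y ^ (γ - 1)) :=
        setLIntegral_mono' measurableSet_Ioo fun y hy => ENNReal.ofReal_le_ofReal <|
          mul_le_of_le_one_right (rpow_nonneg hy.1.le _) (min_le_left _ _)
    _ = ENNReal.ofReal (x ^ γ / γ) := by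
        rw [setLIntegral_Ioo_rpow (by linarith) hx, sub_add_cancel]

lemma rpow_mul_min_one_le (hγ : 0 ≤ γ) {y : ℝ} (hy : y ∈ Ioo 0 x) :
    y ^ (γ - 1) * min 1 ((x - y) ^ (-(2:ℝ))) ≤
      4 * x ^ (-(2:ℝ)) * y ^ (γ - 1) + 2 * x ^ (γ - 1) * min 1 ((x - y) ^ (-(2:ℝ))) := by
  obtain ⟨hy0, hyx⟩ := hy
  have hx : 0 < x := hy0.trans hyx
  have hk : 0 ≤ min 1 ((x - y) ^ (-(2:ℝ))) := le_min zero_le_one (rpow_nonneg (by linarith) _)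
  rcases lt_or_ge y (x / 2) with h | h
  · have hfar : min 1 ((x - y) ^ (-(2:ℝ))) ≤ 4 * x ^ (-(2:ℝ)) :=
      calc min 1 ((x - y) ^ (-(2:ℝ))) ≤ (x / 2) ^ (-(2:ℝ)) :=
            (min_le_right _ _).trans (rpow_le_rpow_of_nonpos (by positivity) (by linarith)
              (by norm_num))
        _ = 4 * x ^ (-(2:ℝ)) := by
            rw [div_rpow hx.le zero_le_two]; norm_num; ring
    have := mul_le_mul_of_nonneg_left hfar (rpow_nonneg hy0.le (γ - 1))
    nlinarith [mul_nonneg (rpow_nonneg hx.le (γ - 1)) hk]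
  · have hnear : y ^ (γ - 1) ≤ 2 * x ^ (γ - 1) := by
      rw [rpow_sub_one hy0.ne', rpow_sub_one hx.ne', mul_div_assoc', div_le_div_iff₀ hy0 hx]
      nlinarith [rpow_le_rpow hy0.le hyx.le hγ, rpow_nonneg hy0.le γ]
    have := mul_le_mul_of_nonneg_right hnear hk
    nlinarith [mul_nonneg (rpow_nonneg hx.le (-(2:ℝ))) (rpow_nonneg hy0.le (γ - 1))]

lemma innerIntegral_le_rpow_add_rpow (hγ : 0 < γ) (hx : 0 < x) :
    innerIntegral γ x ≤ ENNReal.ofReal (4 / γ * x ^ (γ - 2) + 4 * π * x ^ (γ - 1)) := by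
  have hc₁ : 0 ≤ 4 * x ^ (-(2:ℝ)) := by positivity
  have hc₂ : 0 ≤ 2 * x ^ (γ - 1) := by positivity
  calc innerIntegral γ x
      ≤ ∫⁻ y in Ioo 0 x, (ENNReal.ofReal (4 * x ^ (-(2:ℝ))) * ENNReal.ofReal (y ^ (γ - 1)) +
          ENNReal.ofReal (2 * x ^ (γ - 1)) * ENNReal.ofReal (min 1 ((x - y) ^ (-(2:ℝ))))) :=
        setLIntegral_mono' measurableSet_Ioo fun y hy => by
          rw [← ENNReal.ofReal_mul hc₁, ← ENNReal.ofReal_mul hc₂, ← ENNReal.ofReal_add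
            (mul_nonneg hc₁ (rpow_nonneg hy.1.le _))
            (mul_nonneg hc₂ (le_min zero_le_one (rpow_nonneg (sub_nonneg.2 hy.2.le) _)))]
          exact ENNReal.ofReal_le_ofReal (rpow_mul_min_one_le hγ.le hy)
    _ = ENNReal.ofReal (4 * x ^ (-(2:ℝ))) * (∫⁻ y in Ioo 0 x, ENNReal.ofReal (y ^ (γ - 1))) +
          ENNReal.ofReal (2 * x ^ (γ - 1)) *
            ∫⁻ y in Ioo 0 x, ENNReal.ofReal (min 1 ((x - y) ^ (-(2:ℝ)))) := by
        rw [lintegral_add_left (by fun_prop), lintegral_const_mul' _ _ ENNReal.ofReal_ne_top,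
          lintegral_const_mul' _ _ ENNReal.ofReal_ne_top]
    _ ≤ ENNReal.ofReal (4 * x ^ (-(2:ℝ))) * ENNReal.ofReal (x ^ γ / γ) +
          ENNReal.ofReal (2 * x ^ (γ - 1)) * ENNReal.ofReal (2 * π) := by
        gcongr
        · rw [setLIntegral_Ioo_rpow (by linarith) hx, sub_add_cancel]
        · exact setLIntegral_min_one_rpow_neg_two_le x _
    _ = ENNReal.ofReal (4 / γ * x ^ (γ - 2) + 4 * π * x ^ (γ - 1)) := by
        rw [← ENNReal.ofReal_mul hc₁, ← ENNReal.ofReal_mul hc₂, ← ENNReal.ofReal_add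
          (by positivity) (by positivity), sub_eq_add_neg γ 2, rpow_add hx]
        ring_nf

lemma setLIntegral_Ioc_rpow_mul_innerIntegral_lt_top (hγ : 0 < γ) :
    ∫⁻ x in Ioc 0 1, ENNReal.ofReal (x ^ (γ - 1)) * innerIntegral γ x < ⊤ :=
  calc ∫⁻ x in Ioc 0 1, ENNReal.ofReal (x ^ (γ - 1)) * innerIntegral γ x
      ≤ ∫⁻ x in Ioc 0 1, ENNReal.ofReal (x ^ (2 * γ - 1) / γ) :=
        setLIntegral_mono' measurableSet_Ioc fun x hx =>
          calc ENNReal.ofReal (x ^ (γ - 1)) * innerIntegral γ x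
              ≤ ENNReal.ofReal (x ^ (γ - 1)) * ENNReal.ofReal (x ^ γ / γ) := by
                gcongr; exact innerIntegral_le_rpow hγ hx.1
            _ = ENNReal.ofReal (x ^ (2 * γ - 1) / γ) := by
                rw [← ENNReal.ofReal_mul (rpow_nonneg hx.1.le _), mul_div_assoc',
                  ← rpow_add hx.1]
                ring_nf
    _ < ⊤ := by
        have : IntegrableOn (fun x : ℝ => x ^ (2 * γ - 1)) (Ioc 0 1) :=
          (integrableOn_Ioc_iff_integrableOn_Ioo (by finiteness)).2
            ((intervalIntegral.integrableOn_Ioo_rpow_iff one_pos).2 (by linarith))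
        exact (this.div_const γ).lintegral_lt_top

lemma setLIntegral_Ioi_rpow_mul_innerIntegral_lt_top (hγ₀ : 0 < γ) (hγ : γ < 1 / 2) :
    ∫⁻ x in Ioi 1, ENNReal.ofReal (x ^ (γ - 1)) * innerIntegral γ x < ⊤ :=
  calc ∫⁻ x in Ioi 1, ENNReal.ofReal (x ^ (γ - 1)) * innerIntegral γ x
      ≤ ∫⁻ x in Ioi 1, ENNReal.ofReal (4 / γ * x ^ (2 * γ - 3) + 4 * π * x ^ (2 * γ - 2)) :=
        setLIntegral_mono' measurableSet_Ioi fun x (hx : 1 < x) =>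
          have hx₀ : 0 < x := one_pos.trans hx
          calc ENNReal.ofReal (x ^ (γ - 1)) * innerIntegral γ x
              ≤ ENNReal.ofReal (x ^ (γ - 1)) *
                  ENNReal.ofReal (4 / γ * x ^ (γ - 2) + 4 * π * x ^ (γ - 1)) := by
                gcongr; exact innerIntegral_le_rpow_add_rpow hγ₀ hx₀
            _ = ENNReal.ofReal (4 / γ * x ^ (2 * γ - 3) + 4 * π * x ^ (2 * γ - 2)) := by
                rw [← ENNReal.ofReal_mul (rpow_nonneg hx₀.le _),
                  show 2 * γ - 3 = (γ - 1) + (γ - 2) by ring,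
                  show 2 * γ - 2 = (γ - 1) + (γ - 1) by ring, rpow_add hx₀, rpow_add hx₀]
                ring_nf
    _ < ⊤ :=
        (((integrableOn_Ioi_rpow_of_lt (by linarith) one_pos).const_mul _).add
          ((integrableOn_Ioi_rpow_of_lt (by linarith) one_pos).const_mul _)).lintegral_lt_top

end

theorem stmt19 (H : ℝ) (hH : H ∈ Set.Ioo (3/4 : ℝ) 1) (γ : ℝ) (hγ : γ = 2 - 2 * H) :
    ∫⁻ x in Set.Ioi (0 : ℝ),
      ENNReal.ofReal (x ^ (γ - 1)) *
        ∫⁻ y in Set.Ioo (0 : ℝ) x,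
          ENNReal.ofReal (y ^ (γ - 1) * min 1 ((x - y) ^ (-(2:ℝ)))) < ⊤ := by
  have hγ₀ : 0 < γ := by rw [hγ]; linarith [hH.2]
  have hγ₁ : γ < 1 / 2 := by rw [hγ]; linarith [hH.1]
  change ∫⁻ x in Ioi 0, ENNReal.ofReal (x ^ (γ - 1)) * innerIntegral γ x < ⊤
  rw [← Ioc_union_Ioi_eq_Ioi zero_le_one]
  exact (lintegral_union_le _ _ _).trans_lt <| ENNReal.add_lt_top.2
    ⟨setLIntegral_Ioc_rpow_mul_innerIntegral_lt_top hγ₀,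
      setLIntegral_Ioi_rpow_mul_innerIntegral_lt_top hγ₀ hγ₁⟩
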